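/- arXiv:2210.13036 — 2 statements merged into one kernel-verified Lean document; each statement's English description precedes it below -/
import Mathlib

section
/- Let p ∈ MAX, let (c1,c2,c3) be any ordering of triple(p) and let q ∈ Touch_p. If LC(p,q,(c1,c2,c3)) is called, then every path in L(q) receives label c1 (L(L(q)) = {c1}) and every path in R(q) receives a label in {c1,c2} (L(R(q)) ⊆ {c1,c2}). -/
open SimpleGraph

/-- An abstract *binary set of non-crossing shortest paths* (BNCS) in a plane graph.
The fixed planar embedding is abstracted by: edge lengths, the predicate `OuterVertex`
selecting the vertices on the external face, an abstract crossing relation on walks,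
the genealogy partial order `le` (`p ⪯ q` iff `γ_p ⊆ γ_q`), the binary genealogy tree
(`rightChild`, `leftChild`, `parent`, rooted at `root`, every path having zero or two
children), and an abstract type `F` of faces of the union `U = ⋃ p` together with the
boundary `bd f` of each face, its upper path `up f` (the ⪯-minimum path whose interior
contains `f`) and the extremal edges `er f`, `el f` of the lower boundary of `f`,
lying on the right and on the left child of `up f` respectively.  For a non-root path
`m`, `faceOf m` is the face whose upper path is the parent of `m` and `se m` is the
extremal edge of the lower boundary of `faceOf m` belonging to `m`. -/
structure Bncs where
  V : Type
  G : SimpleGraph V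
  len : Sym2 V → ℝ
  OuterVertex : V → Prop
  Crosses : ((u : V) × (v : V) × G.Walk u v) → ((u : V) × (v : V) × G.Walk u v) → Prop
  P : Type
  walk : P → (u : V) × (v : V) × G.Walk u v
  walk_isPath : ∀ p, (walk p).2.2.IsPath
  walk_shortest : ∀ p, ∀ w : G.Walk (walk p).1 (walk p).2.1,
      ((walk p).2.2.edges.map len).sum ≤ (w.edges.map len).sum
  endpoints_outer : ∀ p, OuterVertex (walk p).1 ∧ OuterVertex (walk p).2.1
  single_touch : ∀ p q : P,
      ((walk p).2.2.toSubgraph ⊓ (walk q).2.2.toSubgraph).verts = ∅ ∨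
      ∃ (a b : V) (w : G.Walk a b), w.IsPath ∧
        w.toSubgraph = (walk p).2.2.toSubgraph ⊓ (walk q).2.2.toSubgraph
  non_crossing : ∀ p q : P, ¬ Crosses (walk p) (walk q)
  -- the genealogy partial order ⪯
  le : P → P → Prop
  le_refl : ∀ p, le p p
  le_trans : ∀ p q r, le p q → le q r → le p r
  le_antisymm : ∀ p q, le p q → le q p → p = q
  root : P
  le_root : ∀ p, le p root
  -- the binary genealogy tree (transitive reduction of ⪯)
  rightChild : P → Option P
  leftChild : P → Option P
  two_or_zero : ∀ p, (rightChild p).isSome ↔ (leftChild p).isSome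
  children_ne : ∀ p c, rightChild p = some c → leftChild p ≠ some c
  child_le : ∀ p c, (rightChild p = some c ∨ leftChild p = some c) → le c p ∧ c ≠ p
  child_cov : ∀ p c q, (rightChild p = some c ∨ leftChild p = some c) →
      le c q → le q p → q = c ∨ q = p
  parent : P → Option P
  parent_root : parent root = none
  parent_spec : ∀ c q, parent c = some q ↔ (rightChild q = some c ∨ leftChild q = some c)
  -- faces of U = ⋃_{p} p
  F : Type
  bd : F → G.Subgraph
  bd_le_union : ∀ f, bd f ≤ ⨆ p : P, (walk p).2.2.toSubgraph
  up : F → P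
  er : F → Sym2 V
  el : F → Sym2 V
  er_mem_bd : ∀ f, er f ∈ (bd f).edgeSet
  el_mem_bd : ∀ f, el f ∈ (bd f).edgeSet
  er_mem_child : ∀ f c, rightChild (up f) = some c → er f ∈ (walk c).2.2.edges
  el_mem_child : ∀ f c, leftChild (up f) = some c → el f ∈ (walk c).2.2.edges
  -- a path with two children bounds a face together with them
  face_children : ∀ q cr cl, rightChild q = some cr → leftChild q = some cl →
      ∃ f, up f = q ∧ bd f ≤
        (walk q).2.2.toSubgraph ⊔ (walk cr).2.2.toSubgraph ⊔ (walk cl).2.2.toSubgraph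
  -- the face f_m associated with a non-root path m, and the special edge se^m
  faceOf : P → F
  faceOf_spec : ∀ m q, parent m = some q → up (faceOf m) = q
  se : P → Sym2 V
  se_mem : ∀ p, se p ∈ (walk p).2.2.edges
  se_spec : ∀ m, m ≠ root → se m = er (faceOf m) ∨ se m = el (faceOf m)

namespace Bncs

/-- The edges of the path `q`. -/
def edgesOf (B : Bncs) (q : B.P) : List (Sym2 B.V) := (B.walk q).2.2.edges

/-- The vertices of the path `q`. -/
def supp (B : Bncs) (q : B.P) : List B.V := (B.walk q).2.2.support

/-- The path `q` as a subgraph. -/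
def sub (B : Bncs) (q : B.P) : B.G.Subgraph := (B.walk q).2.2.toSubgraph

/-- `Touch_p`: the paths `q ⪯ p` sharing at least one vertex with `p`. -/
def Touch (B : Bncs) (p : B.P) : Set B.P :=
  {q | B.le q p ∧ ∃ v, v ∈ B.supp q ∧ v ∈ B.supp p}

/-- `Max_p`: the ⪯-maximal elements of `{q : q ⪯ p} \ Touch_p`. -/
def MaxS (B : Bncs) (p : B.P) : Set B.P :=
  {q | B.le q p ∧ q ∉ B.Touch p ∧ ∀ r, B.le r p → r ∉ B.Touch p → B.le q r → q = r}

/-- The levels `MAX_i`:  `MAX_0 = {p1}`, `TOUCH_i = ⋃_{m ∈ MAX_{i-1}} Touch_m` and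
`MAX_i = ⋃_{p ∈ TOUCH_{i-1}} Max_p`. -/
def MAXlevel (B : Bncs) : ℕ → Set B.P
  | 0 => {B.root}
  | i + 1 => ⋃ m ∈ B.MAXlevel i, ⋃ q ∈ B.Touch m, B.MaxS q

/-- `MAX = ⋃_i MAX_i`. -/
def MAXset (B : Bncs) : Set B.P := ⋃ i, B.MAXlevel i

/-- A face of `Touch_p ∪ Max_p` is of type I for `p` if both children of its upper
path lie in `Touch_p`. -/
def TypeI (B : Bncs) (p : B.P) (f : B.F) : Prop :=
  B.up f ∈ B.Touch p ∧ ∃ cr cl, B.rightChild (B.up f) = some cr ∧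
    B.leftChild (B.up f) = some cl ∧ cr ∈ B.Touch p ∧ cl ∈ B.Touch p

/-- A face of `Touch_p ∪ Max_p` is of type II for `p` if both children of its upper
path lie in `Max_p`. -/
def TypeII (B : Bncs) (p : B.P) (f : B.F) : Prop :=
  B.up f ∈ B.Touch p ∧ ∃ cr cl, B.rightChild (B.up f) = some cr ∧
    B.leftChild (B.up f) = some cl ∧ cr ∈ B.MaxS p ∧ cl ∈ B.MaxS p

/-- A face of `Touch_p ∪ Max_p` is of type III for `p` if one child of its upper path
lies in `Touch_p` and the other in `Max_p`. -/
def TypeIII (B : Bncs) (p : B.P) (f : B.F) : Prop :=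
  B.up f ∈ B.Touch p ∧ ∃ cr cl, B.rightChild (B.up f) = some cr ∧
    B.leftChild (B.up f) = some cl ∧
    ((cr ∈ B.Touch p ∧ cl ∈ B.MaxS p) ∨ (cr ∈ B.MaxS p ∧ cl ∈ B.Touch p))

/-- `q` interferes with the face `f` if `q` contains `e^f_r` or `e^f_ℓ`. -/
def Interferes (B : Bncs) (q : B.P) (f : B.F) : Prop :=
  B.er f ∈ B.edgesOf q ∨ B.el f ∈ B.edgesOf q

/-- `m ⇢ m'` iff `m` interferes with `f_{m'}`. -/
def Dash (B : Bncs) (m m' : B.P) : Prop := B.Interferes m (B.faceOf m')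

/-- `Max_p^{III}`: the elements `m` of `Max_p` such that `f_m` is of type III for `p`. -/
def MaxIII (B : Bncs) (p : B.P) : Set B.P :=
  {m | m ∈ B.MaxS p ∧ B.TypeIII p (B.faceOf m)}

/-- The relation `⇢` restricted to `Max_p^{III}`. -/
def DashIn (B : Bncs) (p : B.P) (a b : B.P) : Prop :=
  a ∈ B.MaxIII p ∧ b ∈ B.MaxIII p ∧ B.Dash a b

/-- `a` and `b` lie in the same tree of the forest `(Max_p^{III}, ⇢)`. -/
def SameTree (B : Bncs) (p : B.P) : B.P → B.P → Prop :=
  Relation.ReflTransGen (fun a b => B.DashIn p a b ∨ B.DashIn p b a)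

/-- `q` has exactly one child in `Touch_p`, namely `q'`. -/
def OneChildTouch (B : Bncs) (p q q' : B.P) : Prop :=
  (B.rightChild q = some q' ∧ q' ∈ B.Touch p ∧
      ∀ c, B.leftChild q = some c → c ∉ B.Touch p) ∨
  (B.leftChild q = some q' ∧ q' ∈ B.Touch p ∧
      ∀ c, B.rightChild q = some c → c ∉ B.Touch p)

/-- `q` has two children in `Touch_p`: the right child `qr` and the left child `ql`. -/
def TwoChildTouch (B : Bncs) (p q qr ql : B.P) : Prop :=
  B.rightChild q = some qr ∧ B.leftChild q = some ql ∧ qr ∈ B.Touch p ∧ ql ∈ B.Touch p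

/-- `R^p(q)`: the nodes on the path in `TreeTouch_p` from `q` to the rightmost leaf of
the subtree of `TreeTouch_p` rooted at `q`. -/
inductive Rdesc (B : Bncs) (p : B.P) : B.P → B.P → Prop
  | refl (q : B.P) : Rdesc B p q q
  | one {q q' r : B.P} : B.OneChildTouch p q q' → Rdesc B p q' r → Rdesc B p q r
  | two {q qr ql r : B.P} : B.TwoChildTouch p q qr ql → Rdesc B p qr r → Rdesc B p q r

/-- `L^p(q)`: the nodes on the path in `TreeTouch_p` from `q` to the leftmost leaf of
the subtree of `TreeTouch_p` rooted at `q`. -/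
inductive Ldesc (B : Bncs) (p : B.P) : B.P → B.P → Prop
  | refl (q : B.P) : Ldesc B p q q
  | one {q q' r : B.P} : B.OneChildTouch p q q' → Ldesc B p q' r → Ldesc B p q r
  | two {q qr ql r : B.P} : B.TwoChildTouch p q qr ql → Ldesc B p ql r → Ldesc B p q r

/-- `RCrun B p q c₁ c₂ c₃ r c` holds iff during the execution of `RC(p,q,(c₁,c₂,c₃))`
the path `r` receives the label `c`. -/
inductive RCrun (B : Bncs) (p : B.P) : B.P → ℕ → ℕ → ℕ → B.P → ℕ → Prop
  | base (q : B.P) (c₁ c₂ c₃ : ℕ) : RCrun B p q c₁ c₂ c₃ q c₁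
  | one {q q' : B.P} {c₁ c₂ c₃ : ℕ} {r : B.P} {c : ℕ} :
      B.OneChildTouch p q q' → RCrun B p q' c₁ c₂ c₃ r c → RCrun B p q c₁ c₂ c₃ r c
  | right {q qr ql : B.P} {c₁ c₂ c₃ : ℕ} {r : B.P} {c : ℕ} :
      B.TwoChildTouch p q qr ql → RCrun B p qr c₁ c₃ c₂ r c → RCrun B p q c₁ c₂ c₃ r c
  | left {q qr ql : B.P} {c₁ c₂ c₃ : ℕ} {r : B.P} {c : ℕ} :
      B.TwoChildTouch p q qr ql → RCrun B p ql c₂ c₁ c₃ r c → RCrun B p q c₁ c₂ c₃ r c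

/-- `LCrun B p q c₁ c₂ c₃ r c` holds iff during the execution of `LC(p,q,(c₁,c₂,c₃))`
the path `r` receives the label `c`. -/
inductive LCrun (B : Bncs) (p : B.P) : B.P → ℕ → ℕ → ℕ → B.P → ℕ → Prop
  | base (q : B.P) (c₁ c₂ c₃ : ℕ) : LCrun B p q c₁ c₂ c₃ q c₁
  | one {q q' : B.P} {c₁ c₂ c₃ : ℕ} {r : B.P} {c : ℕ} :
      B.OneChildTouch p q q' → LCrun B p q' c₁ c₂ c₃ r c → LCrun B p q c₁ c₂ c₃ r c
  | left {q qr ql : B.P} {c₁ c₂ c₃ : ℕ} {r : B.P} {c : ℕ} :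
      B.TwoChildTouch p q qr ql → LCrun B p ql c₁ c₃ c₂ r c → LCrun B p q c₁ c₂ c₃ r c
  | right {q qr ql : B.P} {c₁ c₂ c₃ : ℕ} {r : B.P} {c : ℕ} :
      B.TwoChildTouch p q qr ql → LCrun B p qr c₂ c₁ c₃ r c → LCrun B p q c₁ c₂ c₃ r c

/-- `SCrun B p T s q cr cl r c` holds iff during the execution of `SC(p,q,(cr,cl))` —
where `T = triple(p)` and `s = scc(p)` — the path `r` receives the label `c`. -/
inductive SCrun (B : Bncs) (p : B.P) (T : Finset ℕ) (s : ℕ) :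
    B.P → ℕ → ℕ → B.P → ℕ → Prop
  | base (q : B.P) (cr cl : ℕ) : SCrun B p T s q cr cl q s
  | one {q q' : B.P} {cr cl : ℕ} {r : B.P} {c : ℕ} :
      B.OneChildTouch p q q' → SCrun B p T s q' cr cl r c → SCrun B p T s q cr cl r c
  | two_right_sc {q qr ql : B.P} {cr cl t : ℕ} {r : B.P} {c : ℕ} :
      B.TwoChildTouch p q qr ql → B.se p ∈ B.edgesOf qr →
      t ∈ T → t ≠ cl → t ≠ s →
      SCrun B p T s qr cr t r c → SCrun B p T s q cr cl r c
  | two_right_rc {q qr ql : B.P} {cr cl t : ℕ} {r : B.P} {c : ℕ} :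
      B.TwoChildTouch p q qr ql → B.se p ∈ B.edgesOf qr →
      t ∈ T → t ≠ cl → t ≠ s →
      RCrun B p ql cl s t r c → SCrun B p T s q cr cl r c
  | two_left_sc {q qr ql : B.P} {cr cl t : ℕ} {r : B.P} {c : ℕ} :
      B.TwoChildTouch p q qr ql → B.se p ∉ B.edgesOf qr →
      t ∈ T → t ≠ cr → t ≠ s →
      SCrun B p T s ql t cl r c → SCrun B p T s q cr cl r c
  | two_left_lc {q qr ql : B.P} {cr cl t : ℕ} {r : B.P} {c : ℕ} :
      B.TwoChildTouch p q qr ql → B.se p ∉ B.edgesOf qr →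
      t ∈ T → t ≠ cr → t ≠ s →
      LCrun B p qr cr s t r c → SCrun B p T s q cr cl r c

/-- The set of labels that a labeling `L` of the paths puts on the edge `e`. -/
def edgeLabels (B : Bncs) (L : B.P → ℕ) (e : Sym2 B.V) : Set ℕ :=
  {c | ∃ q : B.P, e ∈ B.edgesOf q ∧ L q = c}

/-- The face `f` is solved by the labeling `L` if `L(e^f_r) ∩ L(e^f_ℓ) = ∅`. -/
def SolvedBy (B : Bncs) (L : B.P → ℕ) (f : B.F) : Prop :=
  B.edgeLabels L (B.er f) ∩ B.edgeLabels L (B.el f) = ∅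

/-- `L` is a forest labeling: for each label, the union of the paths with that label
is a forest. -/
def IsForestLabeling (B : Bncs) (L : B.P → ℕ) : Prop :=
  ∀ c : ℕ, (⨆ q ∈ {q : B.P | L q = c}, (B.walk q).2.2.toSubgraph).coe.IsAcyclic

end Bncs

namespace Bncs

variable (B : Bncs)

/-- `a` is a child of `b` in the genealogy tree. -/
def ChildOf (a b : B.P) : Prop := B.parent a = some b

variable {B}

lemma childOf_le {a b : B.P} (h : B.ChildOf a b) : B.le a b ∧ a ≠ b :=
  B.child_le b a ((B.parent_spec a b).mp h)

lemma rtg_le {a b : B.P} (h : Relation.ReflTransGen B.ChildOf a b) : B.le a b := by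
  induction h with
  | refl => exact B.le_refl a
  | tail hab hbc ih => exact B.le_trans _ _ _ ih (childOf_le hbc).1

lemma rtg_comp {a b : B.P} (hab : Relation.ReflTransGen B.ChildOf a b) :
    ∀ c, Relation.ReflTransGen B.ChildOf a c →
      Relation.ReflTransGen B.ChildOf b c ∨ Relation.ReflTransGen B.ChildOf c b := by
  induction hab using Relation.ReflTransGen.head_induction_on with
  | refl => exact fun c h => Or.inl h
  | head hstep htail ih =>
    intro c hc
    rcases Relation.ReflTransGen.cases_head hc with heq | ⟨x, hx, hxc⟩
    · subst heq; exact Or.inr (Relation.ReflTransGen.head hstep htail)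
    · cases Option.some.inj (hstep.symm.trans hx)
      exact ih c hxc

lemma not_rtg_parent {x q : B.P} (h : B.ChildOf x q)
    (hr : Relation.ReflTransGen B.ChildOf q x) : False := by
  have h1 := childOf_le h
  exact h1.2 (B.le_antisymm x q h1.1 (rtg_le hr))

lemma sib_not_rtg {x y q : B.P} (hx : B.ChildOf x q) (hy : B.ChildOf y q)
    (hne : x ≠ y) (h : Relation.ReflTransGen B.ChildOf x y) : False := by
  rcases Relation.ReflTransGen.cases_head h with heq | ⟨z, hz, hzy⟩
  · exact hne heq
  · cases Option.some.inj (hx.symm.trans hz)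
    exact not_rtg_parent hy hzy

lemma oneChild_parent {p q q' : B.P} (h : B.OneChildTouch p q q') : B.ChildOf q' q := by
  rcases h with ⟨h, -, -⟩ | ⟨h, -, -⟩
  · exact (B.parent_spec q' q).mpr (Or.inl h)
  · exact (B.parent_spec q' q).mpr (Or.inr h)

lemma twoChild_parent_r {p q qr ql : B.P} (h : B.TwoChildTouch p q qr ql) :
    B.ChildOf qr q := (B.parent_spec qr q).mpr (Or.inl h.1)

lemma twoChild_parent_l {p q qr ql : B.P} (h : B.TwoChildTouch p q qr ql) :
    B.ChildOf ql q := (B.parent_spec ql q).mpr (Or.inr h.2.1)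

lemma twoChild_ne {p q qr ql : B.P} (h : B.TwoChildTouch p q qr ql) : qr ≠ ql := by
  intro he
  exact B.children_ne q qr h.1 (he ▸ h.2.1)

lemma no_overlap {p q qr ql r : B.P} (h : B.TwoChildTouch p q qr ql)
    (hr : Relation.ReflTransGen B.ChildOf r qr)
    (hl : Relation.ReflTransGen B.ChildOf r ql) : False := by
  rcases rtg_comp hr ql hl with h1 | h1
  · exact sib_not_rtg (twoChild_parent_r h) (twoChild_parent_l h) (twoChild_ne h) h1
  · exact sib_not_rtg (twoChild_parent_l h) (twoChild_parent_r h) (twoChild_ne h).symm h1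

lemma one_two_absurd {p q q' qr ql : B.P} (h1 : B.OneChildTouch p q q')
    (h2 : B.TwoChildTouch p q qr ql) : False := by
  rcases h1 with ⟨-, -, hl⟩ | ⟨-, -, hr⟩
  · exact hl ql h2.2.1 h2.2.2.2
  · exact hr qr h2.1 h2.2.2.1

lemma one_unique {p q a b : B.P} (h1 : B.OneChildTouch p q a)
    (h2 : B.OneChildTouch p q b) : a = b := by
  rcases h1 with ⟨hr1, ht1, hl1⟩ | ⟨hl1, ht1, hr1⟩ <;>
    rcases h2 with ⟨hr2, ht2, hl2⟩ | ⟨hl2, ht2, hr2⟩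
  · exact Option.some.inj (hr1.symm.trans hr2)
  · exact absurd ht1 (hr2 a hr1)
  · exact absurd ht2 (hr1 b hr2)
  · exact Option.some.inj (hl1.symm.trans hl2)

lemma two_unique {p q qr ql qr' ql' : B.P} (h1 : B.TwoChildTouch p q qr ql)
    (h2 : B.TwoChildTouch p q qr' ql') : qr = qr' ∧ ql = ql' :=
  ⟨Option.some.inj (h1.1.symm.trans h2.1), Option.some.inj (h1.2.1.symm.trans h2.2.1)⟩

lemma lcrun_rtg {p q c₁ c₂ c₃ r c : _} (h : B.LCrun p q c₁ c₂ c₃ r c) :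
    Relation.ReflTransGen B.ChildOf r q := by
  induction h with
  | base => exact Relation.ReflTransGen.refl
  | one h1 _ ih => exact ih.tail (oneChild_parent h1)
  | left h2 _ ih => exact ih.tail (twoChild_parent_l h2)
  | right h2 _ ih => exact ih.tail (twoChild_parent_r h2)

lemma ldesc_rtg {p q r : B.P} (h : B.Ldesc p q r) :
    Relation.ReflTransGen B.ChildOf r q := by
  induction h with
  | refl => exact Relation.ReflTransGen.refl
  | one h1 _ ih => exact ih.tail (oneChild_parent h1)
  | two h2 _ ih => exact ih.tail (twoChild_parent_l h2)

lemma rdesc_rtg {p q r : B.P} (h : B.Rdesc p q r) :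
    Relation.ReflTransGen B.ChildOf r q := by
  induction h with
  | refl => exact Relation.ReflTransGen.refl
  | one h1 _ ih => exact ih.tail (oneChild_parent h1)
  | two h2 _ ih => exact ih.tail (twoChild_parent_r h2)

/-- A run below a child of `q` never labels `q` itself. -/
lemma run_ne_root {p x q c₁ c₂ c₃ c : _} (hx : B.ChildOf x q)
    (h : B.LCrun p x c₁ c₂ c₃ q c) : False :=
  not_rtg_parent hx (lcrun_rtg h)

lemma lcrun_main {p : B.P} : ∀ {q c₁ c₂ c₃ r c}, B.LCrun p q c₁ c₂ c₃ r c →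
    (B.Ldesc p q r → c = c₁) ∧ (B.Rdesc p q r → c = c₁ ∨ c = c₂) := by
  intro q c₁ c₂ c₃ r c h
  induction h with
  | base q c₁ c₂ c₃ => exact ⟨fun _ => rfl, fun _ => Or.inl rfl⟩
  | @one q q' c₁ c₂ c₃ r c h1 hrun ih =>
    constructor
    · intro hL
      cases hL with
      | refl => exact absurd hrun (fun h => run_ne_root (oneChild_parent h1) h)
      | one h1' hL' => cases one_unique h1 h1'; exact ih.1 hL'
      | two h2' _ => exact absurd h2' (fun h => one_two_absurd h1 h)
    · intro hR
      cases hR with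
      | refl => exact absurd hrun (fun h => run_ne_root (oneChild_parent h1) h)
      | one h1' hR' => cases one_unique h1 h1'; exact ih.2 hR'
      | two h2' _ => exact absurd h2' (fun h => one_two_absurd h1 h)
  | @left q qr ql c₁ c₂ c₃ r c h2 hrun ih =>
    constructor
    · intro hL
      cases hL with
      | refl => exact absurd hrun (fun h => run_ne_root (twoChild_parent_l h2) h)
      | one h1' _ => exact absurd h1' (fun h => one_two_absurd h h2)
      | two h2' hL' =>
        obtain ⟨hr, hl⟩ := two_unique h2 h2'
        cases hl; exact ih.1 hL'
    · intro hR
      cases hR with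
      | refl => exact absurd hrun (fun h => run_ne_root (twoChild_parent_l h2) h)
      | one h1' _ => exact absurd h1' (fun h => one_two_absurd h h2)
      | two h2' hR' =>
        obtain ⟨hr, hl⟩ := two_unique h2 h2'
        cases hr
        exact absurd (lcrun_rtg hrun) (fun h => no_overlap h2 (rdesc_rtg hR') h)
  | @right q qr ql c₁ c₂ c₃ r c h2 hrun ih =>
    constructor
    · intro hL
      cases hL with
      | refl => exact absurd hrun (fun h => run_ne_root (twoChild_parent_r h2) h)
      | one h1' _ => exact absurd h1' (fun h => one_two_absurd h h2)
      | two h2' hL' =>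
        obtain ⟨hr, hl⟩ := two_unique h2 h2'
        cases hl
        exact absurd (lcrun_rtg hrun) (fun h => no_overlap h2 h (ldesc_rtg hL'))
    · intro hR
      cases hR with
      | refl => exact absurd hrun (fun h => run_ne_root (twoChild_parent_r h2) h)
      | one h1' _ => exact absurd h1' (fun h => one_two_absurd h h2)
      | two h2' hR' =>
        obtain ⟨hr, hl⟩ := two_unique h2 h2'
        cases hr
        rcases ih.2 hR' with h | h
        · exact Or.inr h
        · exact Or.inl h

end Bncs

/-- Let `p ∈ MAX`, let `(c₁,c₂,c₃)` be any ordering of `triple(p)`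
and let `q ∈ Touch_p`.  If `LC(p,q,(c₁,c₂,c₃))` is called, then every path in `L(q)`
receives the label `c₁` and every path in `R(q)` receives a label in `{c₁, c₂}`. -/
theorem LC_labels_left_and_right (B : Bncs) (p : B.P) (hp : p ∈ B.MAXset)
    (c₁ c₂ c₃ : ℕ) (h₁₂ : c₁ ≠ c₂) (h₁₃ : c₁ ≠ c₃) (h₂₃ : c₂ ≠ c₃)
    (q : B.P) (hq : q ∈ B.Touch p) :
    {c | ∃ r, B.Ldesc p q r ∧ B.LCrun p q c₁ c₂ c₃ r c} = {c₁} ∧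
    {c | ∃ r, B.Rdesc p q r ∧ B.LCrun p q c₁ c₂ c₃ r c} ⊆ ({c₁, c₂} : Set ℕ) := by
  constructor
  · ext c
    simp only [Set.mem_setOf_eq, Set.mem_singleton_iff]
    constructor
    · rintro ⟨r, hL, hrun⟩
      exact (Bncs.lcrun_main hrun).1 hL
    · rintro rfl
      exact ⟨q, Bncs.Ldesc.refl q, Bncs.LCrun.base q _ _ _⟩
  · rintro c ⟨r, hR, hrun⟩
    rcases (Bncs.lcrun_main hrun).2 hR with h | h
    · exact Or.inl h
    · exact Or.inr h
end

section
/- Let p ∈ MAX. If CST(p) is called, then for every q ∈ Touch_p the set of labels assigned to R(q) has size at most 2, and the set of labels assigned to L(q) has size at most 2 (|L(R(q))| ≤ 2 and |L(L(q))| ≤ 2). -/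
open SimpleGraph

namespace Bncs

/-- `b` is a child of `a` in the genealogy tree. -/
def CS (B : Bncs) (a b : B.P) : Prop :=
  B.rightChild a = some b ∨ B.leftChild a = some b

/-- Descendance in the genealogy tree. -/
inductive TD (B : Bncs) : B.P → B.P → Prop
  | refl (q : B.P) : TD B q q
  | step {a b r : B.P} : B.CS a b → TD B b r → TD B a r

lemma CS_ne {B : Bncs} {a b : B.P} (h : B.CS a b) : b ≠ a := (B.child_le a b h).2

lemma CS_le {B : Bncs} {a b : B.P} (h : B.CS a b) : B.le b a := (B.child_le a b h).1

lemma CS_parent {B : Bncs} {a a' b : B.P} (h : B.CS a b) (h' : B.CS a' b) : a = a' := by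
  have h1 := (B.parent_spec b a).2 h
  have h2 := (B.parent_spec b a').2 h'
  rw [h1] at h2
  exact Option.some.inj h2

lemma TD_le {B : Bncs} {a b : B.P} (h : B.TD a b) : B.le b a := by
  induction h with
  | refl q => exact B.le_refl q
  | step hcs _ ih => exact B.le_trans _ _ _ ih (CS_le hcs)

lemma TD_trans {B : Bncs} {a b c : B.P} (h1 : B.TD a b) : B.TD b c → B.TD a c := by
  induction h1 with
  | refl => exact id
  | step hcs _ ih => intro h2; exact .step hcs (ih h2)

lemma TD_antisymm {B : Bncs} {a b : B.P} (h1 : B.TD a b) (h2 : B.TD b a) : a = b :=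
  B.le_antisymm a b (TD_le h2) (TD_le h1)

lemma TD_last {B : Bncs} {a w : B.P} (h : B.TD a w) :
    a = w ∨ ∃ z, B.TD a z ∧ B.CS z w := by
  induction h with
  | refl => exact Or.inl rfl
  | step hcs htd ih =>
      rcases ih with rfl | ⟨z, h1, h2⟩
      · exact Or.inr ⟨_, .refl _, hcs⟩
      · exact Or.inr ⟨z, .step hcs h1, h2⟩

lemma TD_comp {B : Bncs} {x y r : B.P} (h1 : B.TD x r) : B.TD y r →
    (B.TD x y ∨ B.TD y x) := by
  induction h1 with
  | refl => exact fun h2 => Or.inr h2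
  | step hcs htd ih =>
      intro h2
      rcases ih h2 with h | h
      · exact Or.inl (.step hcs h)
      · rcases TD_last h with rfl | ⟨z, hz1, hz2⟩
        · exact Or.inl (.step hcs (.refl _))
        · obtain rfl := CS_parent hz2 hcs
          exact Or.inr hz1

lemma subtree_disjoint {B : Bncs} {q x y r : B.P} (hx : B.CS q x) (hy : B.CS q y)
    (hxy : x ≠ y) (dx : B.TD x r) (dy : B.TD y r) : False := by
  have key : ∀ {u v : B.P}, B.CS q u → B.CS q v → B.TD u v → u = v := by
    intro u v hu hv huv
    rcases B.child_cov q v u hv (TD_le huv) (CS_le hu) with h | h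
    · exact h
    · exact absurd h (CS_ne hu)
  rcases TD_comp dx dy with h | h
  · exact hxy (key hx hy h)
  · exact hxy (key hy hx h).symm

lemma no_cycle {B : Bncs} {q0 x q : B.P} (hcs : B.CS q0 x) (h1 : B.TD x q)
    (h2 : B.TD q q0) : False := by
  have e1 : B.le q x := TD_le h1
  have e2 : B.le x q0 := CS_le hcs
  have e3 : B.le q0 q := TD_le h2
  exact CS_ne hcs (B.le_antisymm _ _ e2 (B.le_trans _ _ _ e3 e1))

lemma child_subtree_ne {B : Bncs} {q x r : B.P} (hcs : B.CS q x) (hd : B.TD x r) :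
    r ≠ q := by
  intro h; subst h
  exact CS_ne hcs (B.le_antisymm _ _ (CS_le hcs) (TD_le hd))

lemma one_cs {B : Bncs} {p q q' : B.P} (h : B.OneChildTouch p q q') : B.CS q q' := by
  rcases h with ⟨h, _, _⟩ | ⟨h, _, _⟩
  · exact Or.inl h
  · exact Or.inr h

lemma two_cs_r {B : Bncs} {p q qr ql : B.P} (h : B.TwoChildTouch p q qr ql) :
    B.CS q qr := Or.inl h.1

lemma two_cs_l {B : Bncs} {p q qr ql : B.P} (h : B.TwoChildTouch p q qr ql) :
    B.CS q ql := Or.inr h.2.1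

lemma one_det {B : Bncs} {p q a b : B.P} (h1 : B.OneChildTouch p q a)
    (h2 : B.OneChildTouch p q b) : a = b := by
  rcases h1 with ⟨ha, hat, hal⟩ | ⟨ha, hat, har⟩ <;>
    rcases h2 with ⟨hb, hbt, hbl⟩ | ⟨hb, hbt, hbr⟩
  · exact Option.some.inj (ha.symm.trans hb)
  · exact absurd hat (hbr _ ha)
  · exact absurd hbt (har _ hb)
  · exact Option.some.inj (ha.symm.trans hb)

lemma one_two_excl {B : Bncs} {p q a qr ql : B.P} (h1 : B.OneChildTouch p q a)
    (h2 : B.TwoChildTouch p q qr ql) : False := by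
  rcases h1 with ⟨_, _, hl⟩ | ⟨_, _, hr⟩
  · exact hl ql h2.2.1 h2.2.2.2
  · exact hr qr h2.1 h2.2.2.1

lemma two_det {B : Bncs} {p q a b a' b' : B.P} (h1 : B.TwoChildTouch p q a b)
    (h2 : B.TwoChildTouch p q a' b') : a = a' ∧ b = b' :=
  ⟨Option.some.inj (h1.1.symm.trans h2.1), Option.some.inj (h1.2.1.symm.trans h2.2.1)⟩

lemma two_ne {B : Bncs} {p q a b : B.P} (h : B.TwoChildTouch p q a b) : a ≠ b := by
  intro e; subst e
  exact B.children_ne q a h.1 h.2.1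

lemma RC_td {B : Bncs} {p q0 : B.P} {c1 c2 c3 : ℕ} {r : B.P} {c : ℕ}
    (h : B.RCrun p q0 c1 c2 c3 r c) : B.TD q0 r := by
  induction h with
  | base => exact .refl _
  | one h1 _ ih => exact .step (one_cs h1) ih
  | right h1 _ ih => exact .step (two_cs_r h1) ih
  | left h1 _ ih => exact .step (two_cs_l h1) ih

lemma LC_td {B : Bncs} {p q0 : B.P} {c1 c2 c3 : ℕ} {r : B.P} {c : ℕ}
    (h : B.LCrun p q0 c1 c2 c3 r c) : B.TD q0 r := by
  induction h with
  | base => exact .refl _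
  | one h1 _ ih => exact .step (one_cs h1) ih
  | left h1 _ ih => exact .step (two_cs_l h1) ih
  | right h1 _ ih => exact .step (two_cs_r h1) ih

lemma SC_td {B : Bncs} {p : B.P} {T : Finset ℕ} {s : ℕ} {q0 : B.P} {cr cl : ℕ}
    {r : B.P} {c : ℕ} (h : B.SCrun p T s q0 cr cl r c) : B.TD q0 r := by
  induction h with
  | base => exact .refl _
  | one h1 _ ih => exact .step (one_cs h1) ih
  | two_right_sc h1 _ _ _ _ _ ih => exact .step (two_cs_r h1) ih
  | two_right_rc h1 _ _ _ _ hrc => exact .step (two_cs_l h1) (RC_td hrc)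
  | two_left_sc h1 _ _ _ _ _ ih => exact .step (two_cs_l h1) ih
  | two_left_lc h1 _ _ _ _ hlc => exact .step (two_cs_r h1) (LC_td hlc)

lemma Rdesc_td {B : Bncs} {p q r : B.P} (h : B.Rdesc p q r) : B.TD q r := by
  induction h with
  | refl => exact .refl _
  | one h1 _ ih => exact .step (one_cs h1) ih
  | two h1 _ ih => exact .step (two_cs_r h1) ih

lemma Ldesc_td {B : Bncs} {p q r : B.P} (h : B.Ldesc p q r) : B.TD q r := by
  induction h with
  | refl => exact .refl _
  | one h1 _ ih => exact .step (one_cs h1) ih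
  | two h1 _ ih => exact .step (two_cs_l h1) ih

lemma Rdesc_split {B : Bncs} {p q r a : B.P} (h : B.Rdesc p q r) :
    B.TD a r → B.TD q a → B.Rdesc p a r := by
  induction h with
  | refl q =>
      intro h1 h2
      obtain rfl := TD_antisymm h1 h2
      exact .refl _
  | one h1 hd ih =>
      rename_i qq q' rr
      intro h2 h3
      cases h3 with
      | refl => exact .one h1 hd
      | step hcs h4 =>
          rename_i y
          by_cases hy : y = q' 
          · exact ih h2 (hy ▸ h4)
          · exact (subtree_disjoint hcs (one_cs h1) hy (TD_trans h4 h2)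
              (Rdesc_td hd)).elim
  | two h1 hd ih =>
      rename_i qq qr ql rr
      intro h2 h3
      cases h3 with
      | refl => exact .two h1 hd
      | step hcs h4 =>
          rename_i y
          by_cases hy : y = qr
          · exact ih h2 (hy ▸ h4)
          · exact (subtree_disjoint hcs (two_cs_r h1) hy (TD_trans h4 h2)
              (Rdesc_td hd)).elim

lemma Ldesc_split {B : Bncs} {p q r a : B.P} (h : B.Ldesc p q r) :
    B.TD a r → B.TD q a → B.Ldesc p a r := by
  induction h with
  | refl q =>
      intro h1 h2
      obtain rfl := TD_antisymm h1 h2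
      exact .refl _
  | one h1 hd ih =>
      rename_i qq q' rr
      intro h2 h3
      cases h3 with
      | refl => exact .one h1 hd
      | step hcs h4 =>
          rename_i y
          by_cases hy : y = q' 
          · exact ih h2 (hy ▸ h4)
          · exact (subtree_disjoint hcs (one_cs h1) hy (TD_trans h4 h2)
              (Ldesc_td hd)).elim
  | two h1 hd ih =>
      rename_i qq qr ql rr
      intro h2 h3
      cases h3 with
      | refl => exact .two h1 hd
      | step hcs h4 =>
          rename_i y
          by_cases hy : y = ql
          · exact ih h2 (hy ▸ h4)
          · exact (subtree_disjoint hcs (two_cs_l h1) hy (TD_trans h4 h2)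
              (Ldesc_td hd)).elim


lemma third {T : Finset ℕ} {s u : ℕ} (htp : T.card = 3) (hs : s ∈ T) (hu : u ∈ T)
    (hus : u ≠ s) :
    ∃ t, t ∈ T ∧ t ≠ u ∧ t ≠ s ∧ ∀ t', t' ∈ T → t' ≠ u → t' ≠ s → t' = t := by
  have hne : (T \ {u, s}).Nonempty := by
    rw [← Finset.card_pos]
    have h2 : ({u, s} : Finset ℕ).card ≤ 2 := by
      refine _root_.le_trans (Finset.card_insert_le _ _) ?_
      simp
    have h3 : T.card ≤ (T \ ({u, s} : Finset ℕ)).card + ({u, s} : Finset ℕ).card := by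
      calc T.card ≤ (T ∪ {u, s}).card := Finset.card_le_card Finset.subset_union_left
        _ = (T \ {u, s}).card + ({u, s} : Finset ℕ).card :=
            (Finset.card_sdiff_add_card _ _).symm
    omega
  obtain ⟨t, ht⟩ := hne
  rw [Finset.mem_sdiff, Finset.mem_insert, Finset.mem_singleton] at ht
  push_neg at ht
  obtain ⟨htT, htu, hts⟩ := ht
  refine ⟨t, htT, htu, hts, ?_⟩
  intro t' h1 h2 h3
  by_contra hne'
  have hsub : ({t', t, u, s} : Finset ℕ) ⊆ T := by
    intro z hz
    simp only [Finset.mem_insert, Finset.mem_singleton] at hz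
    rcases hz with rfl | rfl | rfl | rfl
    · exact h1
    · exact htT
    · exact hu
    · exact hs
  have hcard : ({t', t, u, s} : Finset ℕ).card = 4 := by
    rw [Finset.card_insert_of_notMem (by
          simp only [Finset.mem_insert, Finset.mem_singleton]
          push_neg
          exact ⟨hne', h2, h3⟩),
        Finset.card_insert_of_notMem (by
          simp only [Finset.mem_insert, Finset.mem_singleton]
          push_neg
          exact ⟨htu, hts⟩),
        Finset.card_insert_of_notMem (by simp [hus]),
        Finset.card_singleton]
  have := Finset.card_le_card hsub
  omega

lemma RC_R {B : Bncs} {p q0 : B.P} {c1 c2 c3 : ℕ} {r : B.P} {c : ℕ}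
    (h : B.RCrun p q0 c1 c2 c3 r c) : B.Rdesc p q0 r → c = c1 := by
  induction h with
  | base => intro _; rfl
  | one h1 hrun ih =>
      intro hd
      cases hd with
      | refl => exact absurd rfl (child_subtree_ne (one_cs h1) (RC_td hrun))
      | one h2 hd2 => obtain rfl := one_det h2 h1; exact ih hd2
      | two h2 _ => exact (one_two_excl h1 h2).elim
  | right h1 hrun ih =>
      intro hd
      cases hd with
      | refl => exact absurd rfl (child_subtree_ne (two_cs_r h1) (RC_td hrun))
      | one h2 _ => exact (one_two_excl h2 h1).elim
      | two h2 hd2 => obtain ⟨rfl, rfl⟩ := two_det h2 h1; exact ih hd2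
  | left h1 hrun ih =>
      intro hd
      cases hd with
      | refl => exact absurd rfl (child_subtree_ne (two_cs_l h1) (RC_td hrun))
      | one h2 _ => exact (one_two_excl h2 h1).elim
      | two h2 hd2 =>
          obtain ⟨rfl, rfl⟩ := two_det h2 h1
          exact (subtree_disjoint (two_cs_r h1) (two_cs_l h1) (two_ne h1)
            (Rdesc_td hd2) (RC_td hrun)).elim

lemma LC_R {B : Bncs} {p q0 : B.P} {c1 c2 c3 : ℕ} {r : B.P} {c : ℕ}
    (h : B.LCrun p q0 c1 c2 c3 r c) : B.Rdesc p q0 r → c = c1 ∨ c = c2 := by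
  induction h with
  | base => intro _; exact Or.inl rfl
  | one h1 hrun ih =>
      intro hd
      cases hd with
      | refl => exact absurd rfl (child_subtree_ne (one_cs h1) (LC_td hrun))
      | one h2 hd2 => obtain rfl := one_det h2 h1; exact ih hd2
      | two h2 _ => exact (one_two_excl h1 h2).elim
  | left h1 hrun ih =>
      intro hd
      cases hd with
      | refl => exact absurd rfl (child_subtree_ne (two_cs_l h1) (LC_td hrun))
      | one h2 _ => exact (one_two_excl h2 h1).elim
      | two h2 hd2 =>
          obtain ⟨rfl, rfl⟩ := two_det h2 h1
          exact (subtree_disjoint (two_cs_r h1) (two_cs_l h1) (two_ne h1)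
            (Rdesc_td hd2) (LC_td hrun)).elim
  | right h1 hrun ih =>
      intro hd
      cases hd with
      | refl => exact absurd rfl (child_subtree_ne (two_cs_r h1) (LC_td hrun))
      | one h2 _ => exact (one_two_excl h2 h1).elim
      | two h2 hd2 =>
          obtain ⟨rfl, rfl⟩ := two_det h2 h1
          exact (ih hd2).symm

lemma SC_R {B : Bncs} {p : B.P} {T : Finset ℕ} {s : ℕ} {q0 : B.P} {cr cl : ℕ}
    {r : B.P} {c : ℕ} (h : B.SCrun p T s q0 cr cl r c) :
    B.Rdesc p q0 r → c = s ∨ c = cr := by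
  induction h with
  | base => intro _; exact Or.inl rfl
  | one h1 hrun ih =>
      intro hd
      cases hd with
      | refl => exact absurd rfl (child_subtree_ne (one_cs h1) (SC_td hrun))
      | one h2 hd2 => obtain rfl := one_det h2 h1; exact ih hd2
      | two h2 _ => exact (one_two_excl h1 h2).elim
  | two_right_sc h1 hse ht h2 h3 hrun ih =>
      intro hd
      cases hd with
      | refl => exact absurd rfl (child_subtree_ne (two_cs_r h1) (SC_td hrun))
      | one h2' _ => exact (one_two_excl h2' h1).elim
      | two h2' hd2 => obtain ⟨rfl, rfl⟩ := two_det h2' h1; exact ih hd2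
  | two_right_rc h1 hse ht h2 h3 hrc =>
      intro hd
      cases hd with
      | refl => exact absurd rfl (child_subtree_ne (two_cs_l h1) (RC_td hrc))
      | one h2' _ => exact (one_two_excl h2' h1).elim
      | two h2' hd2 =>
          obtain ⟨rfl, rfl⟩ := two_det h2' h1
          exact (subtree_disjoint (two_cs_r h1) (two_cs_l h1) (two_ne h1)
            (Rdesc_td hd2) (RC_td hrc)).elim
  | two_left_sc h1 hse ht h2 h3 hrun ih =>
      intro hd
      cases hd with
      | refl => exact absurd rfl (child_subtree_ne (two_cs_l h1) (SC_td hrun))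
      | one h2' _ => exact (one_two_excl h2' h1).elim
      | two h2' hd2 =>
          obtain ⟨rfl, rfl⟩ := two_det h2' h1
          exact (subtree_disjoint (two_cs_r h1) (two_cs_l h1) (two_ne h1)
            (Rdesc_td hd2) (SC_td hrun)).elim
  | two_left_lc h1 hse ht h2 h3 hlc =>
      intro hd
      cases hd with
      | refl => exact absurd rfl (child_subtree_ne (two_cs_r h1) (LC_td hlc))
      | one h2' _ => exact (one_two_excl h2' h1).elim
      | two h2' hd2 =>
          obtain ⟨rfl, rfl⟩ := two_det h2' h1
          exact (LC_R hlc hd2).symm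

lemma LC_L {B : Bncs} {p q0 : B.P} {c1 c2 c3 : ℕ} {r : B.P} {c : ℕ}
    (h : B.LCrun p q0 c1 c2 c3 r c) : B.Ldesc p q0 r → c = c1 := by
  induction h with
  | base => intro _; rfl
  | one h1 hrun ih =>
      intro hd
      cases hd with
      | refl => exact absurd rfl (child_subtree_ne (one_cs h1) (LC_td hrun))
      | one h2 hd2 => obtain rfl := one_det h2 h1; exact ih hd2
      | two h2 _ => exact (one_two_excl h1 h2).elim
  | left h1 hrun ih =>
      intro hd
      cases hd with
      | refl => exact absurd rfl (child_subtree_ne (two_cs_l h1) (LC_td hrun))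
      | one h2 _ => exact (one_two_excl h2 h1).elim
      | two h2 hd2 => obtain ⟨rfl, rfl⟩ := two_det h2 h1; exact ih hd2
  | right h1 hrun ih =>
      intro hd
      cases hd with
      | refl => exact absurd rfl (child_subtree_ne (two_cs_r h1) (LC_td hrun))
      | one h2 _ => exact (one_two_excl h2 h1).elim
      | two h2 hd2 =>
          obtain ⟨rfl, rfl⟩ := two_det h2 h1
          exact (subtree_disjoint (two_cs_l h1) (two_cs_r h1) (Ne.symm (two_ne h1))
            (Ldesc_td hd2) (LC_td hrun)).elim

lemma RC_L {B : Bncs} {p q0 : B.P} {c1 c2 c3 : ℕ} {r : B.P} {c : ℕ}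
    (h : B.RCrun p q0 c1 c2 c3 r c) : B.Ldesc p q0 r → c = c1 ∨ c = c2 := by
  induction h with
  | base => intro _; exact Or.inl rfl
  | one h1 hrun ih =>
      intro hd
      cases hd with
      | refl => exact absurd rfl (child_subtree_ne (one_cs h1) (RC_td hrun))
      | one h2 hd2 => obtain rfl := one_det h2 h1; exact ih hd2
      | two h2 _ => exact (one_two_excl h1 h2).elim
  | right h1 hrun ih =>
      intro hd
      cases hd with
      | refl => exact absurd rfl (child_subtree_ne (two_cs_r h1) (RC_td hrun))
      | one h2 _ => exact (one_two_excl h2 h1).elim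
      | two h2 hd2 =>
          obtain ⟨rfl, rfl⟩ := two_det h2 h1
          exact (subtree_disjoint (two_cs_l h1) (two_cs_r h1) (Ne.symm (two_ne h1))
            (Ldesc_td hd2) (RC_td hrun)).elim
  | left h1 hrun ih =>
      intro hd
      cases hd with
      | refl => exact absurd rfl (child_subtree_ne (two_cs_l h1) (RC_td hrun))
      | one h2 _ => exact (one_two_excl h2 h1).elim
      | two h2 hd2 =>
          obtain ⟨rfl, rfl⟩ := two_det h2 h1
          exact (ih hd2).symm

lemma SC_L {B : Bncs} {p : B.P} {T : Finset ℕ} {s : ℕ} {q0 : B.P} {cr cl : ℕ}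
    {r : B.P} {c : ℕ} (h : B.SCrun p T s q0 cr cl r c) :
    B.Ldesc p q0 r → c = s ∨ c = cl := by
  induction h with
  | base => intro _; exact Or.inl rfl
  | one h1 hrun ih =>
      intro hd
      cases hd with
      | refl => exact absurd rfl (child_subtree_ne (one_cs h1) (SC_td hrun))
      | one h2 hd2 => obtain rfl := one_det h2 h1; exact ih hd2
      | two h2 _ => exact (one_two_excl h1 h2).elim
  | two_right_sc h1 hse ht h2 h3 hrun ih =>
      intro hd
      cases hd with
      | refl => exact absurd rfl (child_subtree_ne (two_cs_r h1) (SC_td hrun))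
      | one h2' _ => exact (one_two_excl h2' h1).elim
      | two h2' hd2 =>
          obtain ⟨rfl, rfl⟩ := two_det h2' h1
          exact (subtree_disjoint (two_cs_l h1) (two_cs_r h1) (Ne.symm (two_ne h1))
            (Ldesc_td hd2) (SC_td hrun)).elim
  | two_right_rc h1 hse ht h2 h3 hrc =>
      intro hd
      cases hd with
      | refl => exact absurd rfl (child_subtree_ne (two_cs_l h1) (RC_td hrc))
      | one h2' _ => exact (one_two_excl h2' h1).elim
      | two h2' hd2 =>
          obtain ⟨rfl, rfl⟩ := two_det h2' h1
          exact (RC_L hrc hd2).symm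
  | two_left_sc h1 hse ht h2 h3 hrun ih =>
      intro hd
      cases hd with
      | refl => exact absurd rfl (child_subtree_ne (two_cs_l h1) (SC_td hrun))
      | one h2' _ => exact (one_two_excl h2' h1).elim
      | two h2' hd2 => obtain ⟨rfl, rfl⟩ := two_det h2' h1; exact ih hd2
  | two_left_lc h1 hse ht h2 h3 hlc =>
      intro hd
      cases hd with
      | refl => exact absurd rfl (child_subtree_ne (two_cs_r h1) (LC_td hlc))
      | one h2' _ => exact (one_two_excl h2' h1).elim
      | two h2' hd2 =>
          obtain ⟨rfl, rfl⟩ := two_det h2' h1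
          exact (subtree_disjoint (two_cs_l h1) (two_cs_r h1) (Ne.symm (two_ne h1))
            (Ldesc_td hd2) (LC_td hlc)).elim

lemma KEY_RC {B : Bncs} {p : B.P} {q0 q : B.P} (htd : B.TD q0 q) (c1 c2 c3 : ℕ) :
    ∃ a b : ℕ, ∀ r c, B.RCrun p q0 c1 c2 c3 r c → B.Rdesc p q r → c = a ∨ c = b := by
  induction htd generalizing c1 c2 c3 with
  | refl q => exact ⟨c1, c1, fun r c h hd => Or.inl (RC_R h hd)⟩
  | step hcs htd ih =>
      rename_i q0 x qq
      by_cases hone : ∃ q', B.OneChildTouch p q0 q'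
      · obtain ⟨q', h1⟩ := hone
        by_cases hx : x = q'
        · subst hx
          obtain ⟨a, b, hab⟩ := ih c1 c2 c3
          refine ⟨a, b, fun r c h hd => ?_⟩
          cases h with
          | base => exact (no_cycle hcs htd (Rdesc_td hd)).elim
          | one h2 hrun => obtain rfl := one_det h2 h1; exact hab r c hrun hd
          | right h2 _ => exact (one_two_excl h1 h2).elim
          | left h2 _ => exact (one_two_excl h1 h2).elim
        · refine ⟨0, 0, fun r c h hd => ?_⟩
          exfalso
          cases h with
          | base => exact no_cycle hcs htd (Rdesc_td hd)
          | one h2 hrun =>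
              obtain rfl := one_det h2 h1
              exact subtree_disjoint hcs (one_cs h1) hx
                (TD_trans htd (Rdesc_td hd)) (RC_td hrun)
          | right h2 _ => exact one_two_excl h1 h2
          | left h2 _ => exact one_two_excl h1 h2
      · by_cases htwo : ∃ qr ql, B.TwoChildTouch p q0 qr ql
        · obtain ⟨qr, ql, h2⟩ := htwo
          have hxor : x = qr ∨ x = ql := by
            rcases hcs with h | h
            · exact Or.inl (Option.some.inj (h.symm.trans h2.1))
            · exact Or.inr (Option.some.inj (h.symm.trans h2.2.1))
          rcases hxor with rfl | rfl
          · obtain ⟨a, b, hab⟩ := ih c1 c3 c2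
            refine ⟨a, b, fun r c h hd => ?_⟩
            cases h with
            | base => exact (no_cycle hcs htd (Rdesc_td hd)).elim
            | one h3 _ => exact (one_two_excl h3 h2).elim
            | right h3 hrun =>
                obtain ⟨rfl, rfl⟩ := two_det h3 h2
                exact hab r c hrun hd
            | left h3 hrun =>
                obtain ⟨rfl, rfl⟩ := two_det h3 h2
                exact (subtree_disjoint (two_cs_r h2) (two_cs_l h2) (two_ne h2)
                  (TD_trans htd (Rdesc_td hd)) (RC_td hrun)).elim
          · obtain ⟨a, b, hab⟩ := ih c2 c1 c3
            refine ⟨a, b, fun r c h hd => ?_⟩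
            cases h with
            | base => exact (no_cycle hcs htd (Rdesc_td hd)).elim
            | one h3 _ => exact (one_two_excl h3 h2).elim
            | right h3 hrun =>
                obtain ⟨rfl, rfl⟩ := two_det h3 h2
                exact (subtree_disjoint (two_cs_l h2) (two_cs_r h2) (Ne.symm (two_ne h2))
                  (TD_trans htd (Rdesc_td hd)) (RC_td hrun)).elim
            | left h3 hrun =>
                obtain ⟨rfl, rfl⟩ := two_det h3 h2
                exact hab r c hrun hd
        · refine ⟨0, 0, fun r c h hd => ?_⟩
          exfalso
          cases h with
          | base => exact no_cycle hcs htd (Rdesc_td hd)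
          | one h3 _ => exact hone ⟨_, h3⟩
          | right h3 _ => exact htwo ⟨_, _, h3⟩
          | left h3 _ => exact htwo ⟨_, _, h3⟩

lemma KEY_LC {B : Bncs} {p : B.P} {q0 q : B.P} (htd : B.TD q0 q) (c1 c2 c3 : ℕ) :
    ∃ a b : ℕ, ∀ r c, B.LCrun p q0 c1 c2 c3 r c → B.Rdesc p q r → c = a ∨ c = b := by
  induction htd generalizing c1 c2 c3 with
  | refl q => exact ⟨c1, c2, fun r c h hd => LC_R h hd⟩
  | step hcs htd ih =>
      rename_i q0 x qq
      by_cases hone : ∃ q', B.OneChildTouch p q0 q'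
      · obtain ⟨q', h1⟩ := hone
        by_cases hx : x = q'
        · subst hx
          obtain ⟨a, b, hab⟩ := ih c1 c2 c3
          refine ⟨a, b, fun r c h hd => ?_⟩
          cases h with
          | base => exact (no_cycle hcs htd (Rdesc_td hd)).elim
          | one h2 hrun => obtain rfl := one_det h2 h1; exact hab r c hrun hd
          | right h2 _ => exact (one_two_excl h1 h2).elim
          | left h2 _ => exact (one_two_excl h1 h2).elim
        · refine ⟨0, 0, fun r c h hd => ?_⟩
          exfalso
          cases h with
          | base => exact no_cycle hcs htd (Rdesc_td hd)
          | one h2 hrun =>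
              obtain rfl := one_det h2 h1
              exact subtree_disjoint hcs (one_cs h1) hx
                (TD_trans htd (Rdesc_td hd)) (LC_td hrun)
          | right h2 _ => exact one_two_excl h1 h2
          | left h2 _ => exact one_two_excl h1 h2
      · by_cases htwo : ∃ qr ql, B.TwoChildTouch p q0 qr ql
        · obtain ⟨qr, ql, h2⟩ := htwo
          have hxor : x = qr ∨ x = ql := by
            rcases hcs with h | h
            · exact Or.inl (Option.some.inj (h.symm.trans h2.1))
            · exact Or.inr (Option.some.inj (h.symm.trans h2.2.1))
          rcases hxor with rfl | rfl
          · obtain ⟨a, b, hab⟩ := ih c2 c1 c3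
            refine ⟨a, b, fun r c h hd => ?_⟩
            cases h with
            | base => exact (no_cycle hcs htd (Rdesc_td hd)).elim
            | one h3 _ => exact (one_two_excl h3 h2).elim
            | right h3 hrun =>
                obtain ⟨rfl, rfl⟩ := two_det h3 h2
                exact hab r c hrun hd
            | left h3 hrun =>
                obtain ⟨rfl, rfl⟩ := two_det h3 h2
                exact (subtree_disjoint (two_cs_r h2) (two_cs_l h2) (two_ne h2)
                  (TD_trans htd (Rdesc_td hd)) (LC_td hrun)).elim
          · obtain ⟨a, b, hab⟩ := ih c1 c3 c2
            refine ⟨a, b, fun r c h hd => ?_⟩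
            cases h with
            | base => exact (no_cycle hcs htd (Rdesc_td hd)).elim
            | one h3 _ => exact (one_two_excl h3 h2).elim
            | right h3 hrun =>
                obtain ⟨rfl, rfl⟩ := two_det h3 h2
                exact (subtree_disjoint (two_cs_l h2) (two_cs_r h2) (Ne.symm (two_ne h2))
                  (TD_trans htd (Rdesc_td hd)) (LC_td hrun)).elim
            | left h3 hrun =>
                obtain ⟨rfl, rfl⟩ := two_det h3 h2
                exact hab r c hrun hd
        · refine ⟨0, 0, fun r c h hd => ?_⟩
          exfalso
          cases h with
          | base => exact no_cycle hcs htd (Rdesc_td hd)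
          | one h3 _ => exact hone ⟨_, h3⟩
          | right h3 _ => exact htwo ⟨_, _, h3⟩
          | left h3 _ => exact htwo ⟨_, _, h3⟩

lemma KEY_SC {B : Bncs} {p : B.P} {T : Finset ℕ} {s : ℕ} (htp : T.card = 3)
    (hs : s ∈ T) {q0 q : B.P} (htd : B.TD q0 q) (cr cl : ℕ) (hcr : cr ∈ T)
    (hcrs : cr ≠ s) (hcl : cl ∈ T) (hcls : cl ≠ s) :
    ∃ a b : ℕ, ∀ r c, B.SCrun p T s q0 cr cl r c → B.Rdesc p q r → c = a ∨ c = b := by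
  induction htd generalizing cr cl with
  | refl q => exact ⟨s, cr, fun r c h hd => SC_R h hd⟩
  | step hcs htd ih =>
      rename_i q0 x qq
      by_cases hone : ∃ q', B.OneChildTouch p q0 q'
      · obtain ⟨q', h1⟩ := hone
        by_cases hx : x = q'
        · subst hx
          obtain ⟨a, b, hab⟩ := ih cr cl hcr hcrs hcl hcls
          refine ⟨a, b, fun r c h hd => ?_⟩
          cases h with
          | base => exact (no_cycle hcs htd (Rdesc_td hd)).elim
          | one h2 hrun => obtain rfl := one_det h2 h1; exact hab r c hrun hd
          | two_right_sc h2 _ _ _ _ _ => exact (one_two_excl h1 h2).elim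
          | two_right_rc h2 _ _ _ _ _ => exact (one_two_excl h1 h2).elim
          | two_left_sc h2 _ _ _ _ _ => exact (one_two_excl h1 h2).elim
          | two_left_lc h2 _ _ _ _ _ => exact (one_two_excl h1 h2).elim
        · refine ⟨0, 0, fun r c h hd => ?_⟩
          exfalso
          cases h with
          | base => exact no_cycle hcs htd (Rdesc_td hd)
          | one h2 hrun =>
              obtain rfl := one_det h2 h1
              exact subtree_disjoint hcs (one_cs h1) hx
                (TD_trans htd (Rdesc_td hd)) (SC_td hrun)
          | two_right_sc h2 _ _ _ _ _ => exact one_two_excl h1 h2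
          | two_right_rc h2 _ _ _ _ _ => exact one_two_excl h1 h2
          | two_left_sc h2 _ _ _ _ _ => exact one_two_excl h1 h2
          | two_left_lc h2 _ _ _ _ _ => exact one_two_excl h1 h2
      · by_cases htwo : ∃ qr ql, B.TwoChildTouch p q0 qr ql
        · obtain ⟨qr, ql, h2⟩ := htwo
          have hxor : x = qr ∨ x = ql := by
            rcases hcs with h | h
            · exact Or.inl (Option.some.inj (h.symm.trans h2.1))
            · exact Or.inr (Option.some.inj (h.symm.trans h2.2.1))
          by_cases hse : B.se p ∈ B.edgesOf qr
          · obtain ⟨t, htT, htcl, hts, htu⟩ := third htp hs hcl hcls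
            rcases hxor with rfl | rfl
            · -- x = qr : follow SC(qr, cr, t)
              obtain ⟨a, b, hab⟩ := ih cr t hcr hcrs htT hts
              refine ⟨a, b, fun r c h hd => ?_⟩
              cases h with
              | base => exact (no_cycle hcs htd (Rdesc_td hd)).elim
              | one h3 _ => exact (one_two_excl h3 h2).elim
              | two_right_sc h3 _ ht3 hne3 hne3' hrun =>
                  obtain ⟨rfl, rfl⟩ := two_det h3 h2
                  obtain rfl := htu _ ht3 hne3 hne3'
                  exact hab r c hrun hd
              | two_right_rc h3 _ _ _ _ hrc =>
                  obtain ⟨rfl, rfl⟩ := two_det h3 h2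
                  exact (subtree_disjoint (two_cs_r h2) (two_cs_l h2) (two_ne h2)
                    (TD_trans htd (Rdesc_td hd)) (RC_td hrc)).elim
              | two_left_sc h3 hse3 _ _ _ _ =>
                  obtain ⟨rfl, rfl⟩ := two_det h3 h2
                  exact (hse3 hse).elim
              | two_left_lc h3 hse3 _ _ _ _ =>
                  obtain ⟨rfl, rfl⟩ := two_det h3 h2
                  exact (hse3 hse).elim
            · -- x = ql : follow RC(ql, (cl, s, t))
              obtain ⟨a, b, hab⟩ := KEY_RC htd cl s t
              refine ⟨a, b, fun r c h hd => ?_⟩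
              cases h with
              | base => exact (no_cycle hcs htd (Rdesc_td hd)).elim
              | one h3 _ => exact (one_two_excl h3 h2).elim
              | two_right_sc h3 _ _ _ _ hrun =>
                  obtain ⟨rfl, rfl⟩ := two_det h3 h2
                  exact (subtree_disjoint (two_cs_l h2) (two_cs_r h2) (Ne.symm (two_ne h2))
                    (TD_trans htd (Rdesc_td hd)) (SC_td hrun)).elim
              | two_right_rc h3 _ ht3 hne3 hne3' hrc =>
                  obtain ⟨rfl, rfl⟩ := two_det h3 h2
                  obtain rfl := htu _ ht3 hne3 hne3'
                  exact hab r c hrc hd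
              | two_left_sc h3 hse3 _ _ _ _ =>
                  obtain ⟨rfl, rfl⟩ := two_det h3 h2
                  exact (hse3 hse).elim
              | two_left_lc h3 hse3 _ _ _ _ =>
                  obtain ⟨rfl, rfl⟩ := two_det h3 h2
                  exact (hse3 hse).elim
          · obtain ⟨t, htT, htcr, hts, htu⟩ := third htp hs hcr hcrs
            rcases hxor with rfl | rfl
            · -- x = qr : follow LC(qr, (cr, s, t))
              obtain ⟨a, b, hab⟩ := KEY_LC htd cr s t
              refine ⟨a, b, fun r c h hd => ?_⟩
              cases h with
              | base => exact (no_cycle hcs htd (Rdesc_td hd)).elim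
              | one h3 _ => exact (one_two_excl h3 h2).elim
              | two_right_sc h3 hse3 _ _ _ _ =>
                  obtain ⟨rfl, rfl⟩ := two_det h3 h2
                  exact (hse hse3).elim
              | two_right_rc h3 hse3 _ _ _ _ =>
                  obtain ⟨rfl, rfl⟩ := two_det h3 h2
                  exact (hse hse3).elim
              | two_left_sc h3 _ _ _ _ hrun =>
                  obtain ⟨rfl, rfl⟩ := two_det h3 h2
                  exact (subtree_disjoint (two_cs_r h2) (two_cs_l h2) (two_ne h2)
                    (TD_trans htd (Rdesc_td hd)) (SC_td hrun)).elim
              | two_left_lc h3 _ ht3 hne3 hne3' hlc =>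
                  obtain ⟨rfl, rfl⟩ := two_det h3 h2
                  obtain rfl := htu _ ht3 hne3 hne3'
                  exact hab r c hlc hd
            · -- x = ql : follow SC(ql, t, cl)
              obtain ⟨a, b, hab⟩ := ih t cl htT hts hcl hcls
              refine ⟨a, b, fun r c h hd => ?_⟩
              cases h with
              | base => exact (no_cycle hcs htd (Rdesc_td hd)).elim
              | one h3 _ => exact (one_two_excl h3 h2).elim
              | two_right_sc h3 hse3 _ _ _ _ =>
                  obtain ⟨rfl, rfl⟩ := two_det h3 h2
                  exact (hse hse3).elim
              | two_right_rc h3 hse3 _ _ _ _ =>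
                  obtain ⟨rfl, rfl⟩ := two_det h3 h2
                  exact (hse hse3).elim
              | two_left_sc h3 _ ht3 hne3 hne3' hrun =>
                  obtain ⟨rfl, rfl⟩ := two_det h3 h2
                  obtain rfl := htu _ ht3 hne3 hne3'
                  exact hab r c hrun hd
              | two_left_lc h3 _ _ _ _ hlc =>
                  obtain ⟨rfl, rfl⟩ := two_det h3 h2
                  exact (subtree_disjoint (two_cs_l h2) (two_cs_r h2) (Ne.symm (two_ne h2))
                    (TD_trans htd (Rdesc_td hd)) (LC_td hlc)).elim
        · refine ⟨0, 0, fun r c h hd => ?_⟩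
          exfalso
          cases h with
          | base => exact no_cycle hcs htd (Rdesc_td hd)
          | one h3 _ => exact hone ⟨_, h3⟩
          | two_right_sc h3 _ _ _ _ _ => exact htwo ⟨_, _, h3⟩
          | two_right_rc h3 _ _ _ _ _ => exact htwo ⟨_, _, h3⟩
          | two_left_sc h3 _ _ _ _ _ => exact htwo ⟨_, _, h3⟩
          | two_left_lc h3 _ _ _ _ _ => exact htwo ⟨_, _, h3⟩

lemma KEY_RCL {B : Bncs} {p : B.P} {q0 q : B.P} (htd : B.TD q0 q) (c1 c2 c3 : ℕ) :
    ∃ a b : ℕ, ∀ r c, B.RCrun p q0 c1 c2 c3 r c → B.Ldesc p q r → c = a ∨ c = b := by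
  induction htd generalizing c1 c2 c3 with
  | refl q => exact ⟨c1, c2, fun r c h hd => RC_L h hd⟩
  | step hcs htd ih =>
      rename_i q0 x qq
      by_cases hone : ∃ q', B.OneChildTouch p q0 q'
      · obtain ⟨q', h1⟩ := hone
        by_cases hx : x = q'
        · subst hx
          obtain ⟨a, b, hab⟩ := ih c1 c2 c3
          refine ⟨a, b, fun r c h hd => ?_⟩
          cases h with
          | base => exact (no_cycle hcs htd (Ldesc_td hd)).elim
          | one h2 hrun => obtain rfl := one_det h2 h1; exact hab r c hrun hd
          | right h2 _ => exact (one_two_excl h1 h2).elim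
          | left h2 _ => exact (one_two_excl h1 h2).elim
        · refine ⟨0, 0, fun r c h hd => ?_⟩
          exfalso
          cases h with
          | base => exact no_cycle hcs htd (Ldesc_td hd)
          | one h2 hrun =>
              obtain rfl := one_det h2 h1
              exact subtree_disjoint hcs (one_cs h1) hx
                (TD_trans htd (Ldesc_td hd)) (RC_td hrun)
          | right h2 _ => exact one_two_excl h1 h2
          | left h2 _ => exact one_two_excl h1 h2
      · by_cases htwo : ∃ qr ql, B.TwoChildTouch p q0 qr ql
        · obtain ⟨qr, ql, h2⟩ := htwo
          have hxor : x = qr ∨ x = ql := by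
            rcases hcs with h | h
            · exact Or.inl (Option.some.inj (h.symm.trans h2.1))
            · exact Or.inr (Option.some.inj (h.symm.trans h2.2.1))
          rcases hxor with rfl | rfl
          · obtain ⟨a, b, hab⟩ := ih c1 c3 c2
            refine ⟨a, b, fun r c h hd => ?_⟩
            cases h with
            | base => exact (no_cycle hcs htd (Ldesc_td hd)).elim
            | one h3 _ => exact (one_two_excl h3 h2).elim
            | right h3 hrun =>
                obtain ⟨rfl, rfl⟩ := two_det h3 h2
                exact hab r c hrun hd
            | left h3 hrun =>
                obtain ⟨rfl, rfl⟩ := two_det h3 h2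
                exact (subtree_disjoint (two_cs_r h2) (two_cs_l h2) (two_ne h2)
                  (TD_trans htd (Ldesc_td hd)) (RC_td hrun)).elim
          · obtain ⟨a, b, hab⟩ := ih c2 c1 c3
            refine ⟨a, b, fun r c h hd => ?_⟩
            cases h with
            | base => exact (no_cycle hcs htd (Ldesc_td hd)).elim
            | one h3 _ => exact (one_two_excl h3 h2).elim
            | right h3 hrun =>
                obtain ⟨rfl, rfl⟩ := two_det h3 h2
                exact (subtree_disjoint (two_cs_l h2) (two_cs_r h2) (Ne.symm (two_ne h2))
                  (TD_trans htd (Ldesc_td hd)) (RC_td hrun)).elim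
            | left h3 hrun =>
                obtain ⟨rfl, rfl⟩ := two_det h3 h2
                exact hab r c hrun hd
        · refine ⟨0, 0, fun r c h hd => ?_⟩
          exfalso
          cases h with
          | base => exact no_cycle hcs htd (Ldesc_td hd)
          | one h3 _ => exact hone ⟨_, h3⟩
          | right h3 _ => exact htwo ⟨_, _, h3⟩
          | left h3 _ => exact htwo ⟨_, _, h3⟩

lemma KEY_LCL {B : Bncs} {p : B.P} {q0 q : B.P} (htd : B.TD q0 q) (c1 c2 c3 : ℕ) :
    ∃ a b : ℕ, ∀ r c, B.LCrun p q0 c1 c2 c3 r c → B.Ldesc p q r → c = a ∨ c = b := by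
  induction htd generalizing c1 c2 c3 with
  | refl q => exact ⟨c1, c1, fun r c h hd => Or.inl (LC_L h hd)⟩
  | step hcs htd ih =>
      rename_i q0 x qq
      by_cases hone : ∃ q', B.OneChildTouch p q0 q'
      · obtain ⟨q', h1⟩ := hone
        by_cases hx : x = q'
        · subst hx
          obtain ⟨a, b, hab⟩ := ih c1 c2 c3
          refine ⟨a, b, fun r c h hd => ?_⟩
          cases h with
          | base => exact (no_cycle hcs htd (Ldesc_td hd)).elim
          | one h2 hrun => obtain rfl := one_det h2 h1; exact hab r c hrun hd
          | right h2 _ => exact (one_two_excl h1 h2).elim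
          | left h2 _ => exact (one_two_excl h1 h2).elim
        · refine ⟨0, 0, fun r c h hd => ?_⟩
          exfalso
          cases h with
          | base => exact no_cycle hcs htd (Ldesc_td hd)
          | one h2 hrun =>
              obtain rfl := one_det h2 h1
              exact subtree_disjoint hcs (one_cs h1) hx
                (TD_trans htd (Ldesc_td hd)) (LC_td hrun)
          | right h2 _ => exact one_two_excl h1 h2
          | left h2 _ => exact one_two_excl h1 h2
      · by_cases htwo : ∃ qr ql, B.TwoChildTouch p q0 qr ql
        · obtain ⟨qr, ql, h2⟩ := htwo
          have hxor : x = qr ∨ x = ql := by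
            rcases hcs with h | h
            · exact Or.inl (Option.some.inj (h.symm.trans h2.1))
            · exact Or.inr (Option.some.inj (h.symm.trans h2.2.1))
          rcases hxor with rfl | rfl
          · obtain ⟨a, b, hab⟩ := ih c2 c1 c3
            refine ⟨a, b, fun r c h hd => ?_⟩
            cases h with
            | base => exact (no_cycle hcs htd (Ldesc_td hd)).elim
            | one h3 _ => exact (one_two_excl h3 h2).elim
            | right h3 hrun =>
                obtain ⟨rfl, rfl⟩ := two_det h3 h2
                exact hab r c hrun hd
            | left h3 hrun =>
                obtain ⟨rfl, rfl⟩ := two_det h3 h2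
                exact (subtree_disjoint (two_cs_r h2) (two_cs_l h2) (two_ne h2)
                  (TD_trans htd (Ldesc_td hd)) (LC_td hrun)).elim
          · obtain ⟨a, b, hab⟩ := ih c1 c3 c2
            refine ⟨a, b, fun r c h hd => ?_⟩
            cases h with
            | base => exact (no_cycle hcs htd (Ldesc_td hd)).elim
            | one h3 _ => exact (one_two_excl h3 h2).elim
            | right h3 hrun =>
                obtain ⟨rfl, rfl⟩ := two_det h3 h2
                exact (subtree_disjoint (two_cs_l h2) (two_cs_r h2) (Ne.symm (two_ne h2))
                  (TD_trans htd (Ldesc_td hd)) (LC_td hrun)).elim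
            | left h3 hrun =>
                obtain ⟨rfl, rfl⟩ := two_det h3 h2
                exact hab r c hrun hd
        · refine ⟨0, 0, fun r c h hd => ?_⟩
          exfalso
          cases h with
          | base => exact no_cycle hcs htd (Ldesc_td hd)
          | one h3 _ => exact hone ⟨_, h3⟩
          | right h3 _ => exact htwo ⟨_, _, h3⟩
          | left h3 _ => exact htwo ⟨_, _, h3⟩

lemma KEY_SCL {B : Bncs} {p : B.P} {T : Finset ℕ} {s : ℕ} (htp : T.card = 3)
    (hs : s ∈ T) {q0 q : B.P} (htd : B.TD q0 q) (cr cl : ℕ) (hcr : cr ∈ T)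
    (hcrs : cr ≠ s) (hcl : cl ∈ T) (hcls : cl ≠ s) :
    ∃ a b : ℕ, ∀ r c, B.SCrun p T s q0 cr cl r c → B.Ldesc p q r → c = a ∨ c = b := by
  induction htd generalizing cr cl with
  | refl q => exact ⟨s, cl, fun r c h hd => SC_L h hd⟩
  | step hcs htd ih =>
      rename_i q0 x qq
      by_cases hone : ∃ q', B.OneChildTouch p q0 q'
      · obtain ⟨q', h1⟩ := hone
        by_cases hx : x = q'
        · subst hx
          obtain ⟨a, b, hab⟩ := ih cr cl hcr hcrs hcl hcls
          refine ⟨a, b, fun r c h hd => ?_⟩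
          cases h with
          | base => exact (no_cycle hcs htd (Ldesc_td hd)).elim
          | one h2 hrun => obtain rfl := one_det h2 h1; exact hab r c hrun hd
          | two_right_sc h2 _ _ _ _ _ => exact (one_two_excl h1 h2).elim
          | two_right_rc h2 _ _ _ _ _ => exact (one_two_excl h1 h2).elim
          | two_left_sc h2 _ _ _ _ _ => exact (one_two_excl h1 h2).elim
          | two_left_lc h2 _ _ _ _ _ => exact (one_two_excl h1 h2).elim
        · refine ⟨0, 0, fun r c h hd => ?_⟩
          exfalso
          cases h with
          | base => exact no_cycle hcs htd (Ldesc_td hd)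
          | one h2 hrun =>
              obtain rfl := one_det h2 h1
              exact subtree_disjoint hcs (one_cs h1) hx
                (TD_trans htd (Ldesc_td hd)) (SC_td hrun)
          | two_right_sc h2 _ _ _ _ _ => exact one_two_excl h1 h2
          | two_right_rc h2 _ _ _ _ _ => exact one_two_excl h1 h2
          | two_left_sc h2 _ _ _ _ _ => exact one_two_excl h1 h2
          | two_left_lc h2 _ _ _ _ _ => exact one_two_excl h1 h2
      · by_cases htwo : ∃ qr ql, B.TwoChildTouch p q0 qr ql
        · obtain ⟨qr, ql, h2⟩ := htwo
          have hxor : x = qr ∨ x = ql := by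
            rcases hcs with h | h
            · exact Or.inl (Option.some.inj (h.symm.trans h2.1))
            · exact Or.inr (Option.some.inj (h.symm.trans h2.2.1))
          by_cases hse : B.se p ∈ B.edgesOf qr
          · obtain ⟨t, htT, htcl, hts, htu⟩ := third htp hs hcl hcls
            rcases hxor with rfl | rfl
            · -- x = qr : follow SC(qr, cr, t)
              obtain ⟨a, b, hab⟩ := ih cr t hcr hcrs htT hts
              refine ⟨a, b, fun r c h hd => ?_⟩
              cases h with
              | base => exact (no_cycle hcs htd (Ldesc_td hd)).elim
              | one h3 _ => exact (one_two_excl h3 h2).elim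
              | two_right_sc h3 _ ht3 hne3 hne3' hrun =>
                  obtain ⟨rfl, rfl⟩ := two_det h3 h2
                  obtain rfl := htu _ ht3 hne3 hne3'
                  exact hab r c hrun hd
              | two_right_rc h3 _ _ _ _ hrc =>
                  obtain ⟨rfl, rfl⟩ := two_det h3 h2
                  exact (subtree_disjoint (two_cs_r h2) (two_cs_l h2) (two_ne h2)
                    (TD_trans htd (Ldesc_td hd)) (RC_td hrc)).elim
              | two_left_sc h3 hse3 _ _ _ _ =>
                  obtain ⟨rfl, rfl⟩ := two_det h3 h2
                  exact (hse3 hse).elim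
              | two_left_lc h3 hse3 _ _ _ _ =>
                  obtain ⟨rfl, rfl⟩ := two_det h3 h2
                  exact (hse3 hse).elim
            · -- x = ql : follow RC(ql, (cl, s, t))
              obtain ⟨a, b, hab⟩ := KEY_RCL htd cl s t
              refine ⟨a, b, fun r c h hd => ?_⟩
              cases h with
              | base => exact (no_cycle hcs htd (Ldesc_td hd)).elim
              | one h3 _ => exact (one_two_excl h3 h2).elim
              | two_right_sc h3 _ _ _ _ hrun =>
                  obtain ⟨rfl, rfl⟩ := two_det h3 h2
                  exact (subtree_disjoint (two_cs_l h2) (two_cs_r h2) (Ne.symm (two_ne h2))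
                    (TD_trans htd (Ldesc_td hd)) (SC_td hrun)).elim
              | two_right_rc h3 _ ht3 hne3 hne3' hrc =>
                  obtain ⟨rfl, rfl⟩ := two_det h3 h2
                  obtain rfl := htu _ ht3 hne3 hne3'
                  exact hab r c hrc hd
              | two_left_sc h3 hse3 _ _ _ _ =>
                  obtain ⟨rfl, rfl⟩ := two_det h3 h2
                  exact (hse3 hse).elim
              | two_left_lc h3 hse3 _ _ _ _ =>
                  obtain ⟨rfl, rfl⟩ := two_det h3 h2
                  exact (hse3 hse).elim
          · obtain ⟨t, htT, htcr, hts, htu⟩ := third htp hs hcr hcrs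
            rcases hxor with rfl | rfl
            · -- x = qr : follow LC(qr, (cr, s, t))
              obtain ⟨a, b, hab⟩ := KEY_LCL htd cr s t
              refine ⟨a, b, fun r c h hd => ?_⟩
              cases h with
              | base => exact (no_cycle hcs htd (Ldesc_td hd)).elim
              | one h3 _ => exact (one_two_excl h3 h2).elim
              | two_right_sc h3 hse3 _ _ _ _ =>
                  obtain ⟨rfl, rfl⟩ := two_det h3 h2
                  exact (hse hse3).elim
              | two_right_rc h3 hse3 _ _ _ _ =>
                  obtain ⟨rfl, rfl⟩ := two_det h3 h2
                  exact (hse hse3).elim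
              | two_left_sc h3 _ _ _ _ hrun =>
                  obtain ⟨rfl, rfl⟩ := two_det h3 h2
                  exact (subtree_disjoint (two_cs_r h2) (two_cs_l h2) (two_ne h2)
                    (TD_trans htd (Ldesc_td hd)) (SC_td hrun)).elim
              | two_left_lc h3 _ ht3 hne3 hne3' hlc =>
                  obtain ⟨rfl, rfl⟩ := two_det h3 h2
                  obtain rfl := htu _ ht3 hne3 hne3'
                  exact hab r c hlc hd
            · -- x = ql : follow SC(ql, t, cl)
              obtain ⟨a, b, hab⟩ := ih t cl htT hts hcl hcls
              refine ⟨a, b, fun r c h hd => ?_⟩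
              cases h with
              | base => exact (no_cycle hcs htd (Ldesc_td hd)).elim
              | one h3 _ => exact (one_two_excl h3 h2).elim
              | two_right_sc h3 hse3 _ _ _ _ =>
                  obtain ⟨rfl, rfl⟩ := two_det h3 h2
                  exact (hse hse3).elim
              | two_right_rc h3 hse3 _ _ _ _ =>
                  obtain ⟨rfl, rfl⟩ := two_det h3 h2
                  exact (hse hse3).elim
              | two_left_sc h3 _ ht3 hne3 hne3' hrun =>
                  obtain ⟨rfl, rfl⟩ := two_det h3 h2
                  obtain rfl := htu _ ht3 hne3 hne3'
                  exact hab r c hrun hd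
              | two_left_lc h3 _ _ _ _ hlc =>
                  obtain ⟨rfl, rfl⟩ := two_det h3 h2
                  exact (subtree_disjoint (two_cs_l h2) (two_cs_r h2) (Ne.symm (two_ne h2))
                    (TD_trans htd (Ldesc_td hd)) (LC_td hlc)).elim
        · refine ⟨0, 0, fun r c h hd => ?_⟩
          exfalso
          cases h with
          | base => exact no_cycle hcs htd (Ldesc_td hd)
          | one h3 _ => exact hone ⟨_, h3⟩
          | two_right_sc h3 _ _ _ _ _ => exact htwo ⟨_, _, h3⟩
          | two_right_rc h3 _ _ _ _ _ => exact htwo ⟨_, _, h3⟩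
          | two_left_sc h3 _ _ _ _ _ => exact htwo ⟨_, _, h3⟩
          | two_left_lc h3 _ _ _ _ _ => exact htwo ⟨_, _, h3⟩

end Bncs

/-- Let `p ∈ MAX`.  If `CST(p)` is called — i.e. `SC(p,p,(c_r,c_ℓ))`
with `c_r, c_ℓ ∈ triple(p) \ {scc(p)}` — then for every `q ∈ Touch_p` the set of
labels assigned to `R(q)` has size at most 2, and the set of labels assigned to
`L(q)` has size at most 2. -/
theorem CST_at_most_two_labels_on_R_and_L (B : Bncs) (p : B.P) (hp : p ∈ B.MAXset)
    (tp : Finset ℕ) (s cr cl : ℕ) (htp : tp.card = 3) (hs : s ∈ tp)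
    (hcr : cr ∈ tp) (hcl : cl ∈ tp) (hcrs : cr ≠ s) (hcls : cl ≠ s)
    (q : B.P) (hq : q ∈ B.Touch p) :
    (∃ a b, {c | ∃ r, B.Rdesc p q r ∧ B.SCrun p tp s p cr cl r c} ⊆ ({a, b} : Set ℕ)) ∧
    (∃ a b, {c | ∃ r, B.Ldesc p q r ∧ B.SCrun p tp s p cr cl r c} ⊆ ({a, b} : Set ℕ)) := by
  constructor
  · by_cases h : B.TD p q
    · obtain ⟨a, b, hab⟩ := Bncs.KEY_SC htp hs h cr cl hcr hcrs hcl hcls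
      refine ⟨a, b, ?_⟩
      rintro c ⟨r, hrd, hrun⟩
      rcases hab r c hrun hrd with rfl | rfl
      · exact Set.mem_insert _ _
      · exact Set.mem_insert_of_mem _ rfl
    · refine ⟨s, cr, ?_⟩
      rintro c ⟨r, hrd, hrun⟩
      have h1 : B.TD p r := Bncs.SC_td hrun
      have h2 : B.TD q r := Bncs.Rdesc_td hrd
      rcases Bncs.TD_comp h1 h2 with h3 | h3
      · exact absurd h3 h
      · have hd' : B.Rdesc p p r := Bncs.Rdesc_split hrd h1 h3
        rcases Bncs.SC_R hrun hd' with rfl | rfl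
        · exact Set.mem_insert _ _
        · exact Set.mem_insert_of_mem _ rfl
  · by_cases h : B.TD p q
    · obtain ⟨a, b, hab⟩ := Bncs.KEY_SCL htp hs h cr cl hcr hcrs hcl hcls
      refine ⟨a, b, ?_⟩
      rintro c ⟨r, hrd, hrun⟩
      rcases hab r c hrun hrd with rfl | rfl
      · exact Set.mem_insert _ _
      · exact Set.mem_insert_of_mem _ rfl
    · refine ⟨s, cl, ?_⟩
      rintro c ⟨r, hrd, hrun⟩
      have h1 : B.TD p r := Bncs.SC_td hrun
      have h2 : B.TD q r := Bncs.Ldesc_td hrd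
      rcases Bncs.TD_comp h1 h2 with h3 | h3
      · exact absurd h3 h
      · have hd' : B.Ldesc p p r := Bncs.Ldesc_split hrd h1 h3
        rcases Bncs.SC_L hrun hd' with rfl | rfl
        · exact Set.mem_insert _ _
        · exact Set.mem_insert_of_mem _ rfl
end
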